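/- arXiv:2307.03106 — 2 statements merged into one kernel-verified Lean document; each statement's English description precedes it below -/
import Mathlib

section
/- Let G be a group and let S be a nonempty proper subset of G. The Cayley poset P(G,S) is a Cayley representation of G if and only if the complement Cayley poset P(G, G∖S) is a Cayley representation of G. -/
variable {G : Type*}

/-- The order relation of the Cayley poset `P(G,S)`: the underlying set is the disjoint
union of two copies of `G` (`Sum.inl g` is written `g`, `Sum.inr h` is written `h'`),
with `g < h'` iff `g⁻¹ * h ∈ S`, and no other distinct elements comparable. -/
def cayleyLE [Group G] (S : Set G) : G ⊕ G → G ⊕ G → Prop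
  | Sum.inl g, Sum.inl h => g = h
  | Sum.inl g, Sum.inr h => g⁻¹ * h ∈ S
  | Sum.inr _, Sum.inl _ => False
  | Sum.inr g, Sum.inr h => g = h

/-- The Cayley poset `P(G,S)` as a type synonym for `G ⊕ G`. -/
def CayleyPoset (G : Type*) [Group G] (S : Set G) : Type _ := G ⊕ G

instance [Group G] (S : Set G) : PartialOrder (CayleyPoset G S) where
  le x y := cayleyLE S x y
  le_refl x := by cases x <;> exact rfl
  le_trans x y z hxy hyz := by
    cases x <;> cases y <;> cases z <;> simp_all [cayleyLE]
  le_antisymm x y hxy hyx := by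
    cases x <;> cases y <;> simp_all [cayleyLE] <;> rfl

/-- The map `L(g)` on `P(G,S)`: `h ↦ g*h` on minimal points and `h' ↦ (g*h)'` on
maximal points. -/
def cayleyL [Group G] (g : G) : G ⊕ G → G ⊕ G
  | Sum.inl h => Sum.inl (g * h)
  | Sum.inr h => Sum.inr (g * h)

/-- `P(G,S)` is a Cayley representation of `G` if every order automorphism of the
Cayley poset `P(G,S)` equals `L(g)` for some `g ∈ G`. -/
def IsCayleyRep (G : Type*) [Group G] (S : Set G) : Prop :=
  ∀ φ : CayleyPoset G S ≃o CayleyPoset G S,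
    ∃ g : G, ∀ p : CayleyPoset G S, φ p = cayleyL g p

/-!
For nonempty `S` the maximal points of `P(G,S)` are exactly the primed elements, and `P(G,Sᶜ)` is
`P(G,S)` with the relation between non-maximal and maximal points complemented. An automorphism
of `P(G,S)` preserves maximality and the order, hence also this complemented relation, so it is an
automorphism of `P(G,Sᶜ)` with the same underlying permutation of `G ⊕ G`. When `S` and `Sᶜ` are
both nonempty, the two posets therefore have the same automorphisms.
-/

namespace CayleyPoset

variable [Group G] {S : Set G}

theorem isMax_iff_isRight (hS : S.Nonempty) (x : CayleyPoset G S) :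
    IsMax x ↔ Sum.isRight x := by
  rcases x with g | g
  · obtain ⟨s, hs⟩ := hS
    have hle : cayleyLE S (Sum.inl g) (Sum.inr (g * s)) := by simpa [cayleyLE] using hs
    exact iff_of_false (fun hmax => hmax hle) (by simp)
  · refine iff_of_true ?_ rfl
    rintro (h | h) hle
    · exact (hle : False).elim
    · exact le_of_eq (congrArg Sum.inr (hle : g = h)).symm

theorem cayleyLE_compl_iff (hS : S.Nonempty) (x y : CayleyPoset G S) :
    cayleyLE Sᶜ x y ↔ Xor (¬IsMax x ∧ IsMax y) (x ≤ y) := by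
  rw [isMax_iff_isRight hS, isMax_iff_isRight hS]
  rcases x with g | g <;> rcases y with h | h <;>
    simp only [Sum.isRight_inl, Sum.isRight_inr, Bool.false_eq_true, not_false_eq_true,
      not_true_eq_false, and_false, and_true, and_self, xor_false, xor_true, id_eq] <;>
    exact Iff.rfl

theorem cayleyLE_compl_apply_iff (hS : S.Nonempty) (φ : CayleyPoset G S ≃o CayleyPoset G S)
    (x y : CayleyPoset G S) : cayleyLE Sᶜ (φ x) (φ y) ↔ cayleyLE Sᶜ x y := by
  rw [cayleyLE_compl_iff hS, cayleyLE_compl_iff hS, φ.isMax_apply, φ.isMax_apply, φ.le_iff_le]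

def complOrderIso (hS : S.Nonempty) (φ : CayleyPoset G S ≃o CayleyPoset G S) :
    CayleyPoset G Sᶜ ≃o CayleyPoset G Sᶜ where
  toEquiv := φ.toEquiv
  map_rel_iff' := cayleyLE_compl_apply_iff hS φ _ _

end CayleyPoset

theorem IsCayleyRep.of_compl [Group G] {S : Set G} (hS : S.Nonempty) (h : IsCayleyRep G Sᶜ) :
    IsCayleyRep G S := fun φ => h (CayleyPoset.complOrderIso hS φ)

/-- For a nonempty proper subset `S ⊆ G`, `P(G,S)` is a Cayley
representation of `G` iff the complement `P(G, G ∖ S)` is. -/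
theorem cayleyRep_iff_complement (G : Type*) [Group G] (S : Set G)
    (hne : S.Nonempty) (hproper : S ≠ Set.univ) :
    IsCayleyRep G S ↔ IsCayleyRep G Sᶜ := by
  refine ⟨fun h => IsCayleyRep.of_compl (Set.nonempty_compl.mpr hproper) ?_,
    IsCayleyRep.of_compl hne⟩
  rwa [compl_compl]
end

section
/- Let G be a group and let S be a nonempty subset of G. The Cayley poset P(G,S) is connected (any two points are joined by a finite sequence of pairwise-comparable consecutive points) if and only if the set SS⁻¹ = {st⁻¹ : s, t ∈ S} generates G. -/
variable {G : Type*}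

/-
Fix `s₀ ∈ S`. Every maximal point `h'` lies above the minimal point `h s₀⁻¹`, and the minimal
points `g` and `g s t⁻¹` (`s, t ∈ S`) both lie below `(g s)'`; since left multiplication is an
order automorphism, `⟨S S⁻¹⟩ = G` therefore connects everything. Conversely, the map
`g ↦ g H`, `h' ↦ h s₀⁻¹ H` to `G ⧸ H`, `H = ⟨S S⁻¹⟩`, is constant along comparabilities, so
connectedness forces `H = G`.
-/

open Pointwise Relation

lemma Monotone.reflTransGen_symmGen {α β : Type*} [Preorder α] [Preorder β] {f : α → β}
    (hf : Monotone f) {x y : α} (hxy : ReflTransGen (SymmGen (· ≤ ·)) x y) :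
    ReflTransGen (SymmGen (· ≤ ·)) (f x) (f y) :=
  ReflTransGen.lift f (fun _ _ hab ↦ hab.imp (hf ·) (hf ·)) _ _ hxy

namespace CayleyPoset

variable [Group G] {S : Set G} {g h : G}

def inl (g : G) : CayleyPoset G S := Sum.inl g

def inr (h : G) : CayleyPoset G S := Sum.inr h

@[elab_as_elim, induction_eliminator]
protected lemma induction {motive : CayleyPoset G S → Prop} (inl : ∀ g, motive (inl g))
    (inr : ∀ h, motive (inr h)) (x : CayleyPoset G S) : motive x :=
  Sum.rec inl inr x

@[simp]
lemma inl_le_inl : (inl g : CayleyPoset G S) ≤ inl h ↔ g = h := Iff.rfl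

@[simp]
lemma inl_le_inr : (inl g : CayleyPoset G S) ≤ inr h ↔ g⁻¹ * h ∈ S := Iff.rfl

@[simp]
lemma not_inr_le_inl : ¬(inr g : CayleyPoset G S) ≤ inl h := id

@[simp]
lemma inr_le_inr : (inr g : CayleyPoset G S) ≤ inr h ↔ g = h := Iff.rfl

def leftMul (g : G) : CayleyPoset G S →o CayleyPoset G S where
  toFun := cayleyL g
  monotone' x y (hxy : cayleyLE S x y) := show cayleyLE S (cayleyL g x) (cayleyL g y) by
    cases x <;> cases y <;> simp_all [cayleyLE, cayleyL, mul_assoc]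

@[simp]
lemma leftMul_inl (g h : G) : leftMul g (inl h : CayleyPoset G S) = inl (g * h) := rfl

lemma reflTransGen_inl_one_inl_of_mem_closure (hg : g ∈ Subgroup.closure (S * S⁻¹)) :
    ReflTransGen (SymmGen (· ≤ ·)) (inl 1 : CayleyPoset G S) (inl g) := by
  induction hg using Subgroup.closure_induction with
  | mem _ hst =>
    obtain ⟨s, hs, t, ht, rfl⟩ := hst
    have hlow : (inl 1 : CayleyPoset G S) ≤ inr s := by simpa using hs
    have hhigh : (inl (s * t) : CayleyPoset G S) ≤ inr s := by simpa [mul_assoc] using ht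
    exact .tail (.single hlow.symmGen) hhigh.symmGen_symm
  | one => rfl
  | mul a b _ _ ha hb =>
    exact ha.trans (by simpa using (leftMul a).monotone.reflTransGen_symmGen hb)
  | inv a _ ha =>
    have := (leftMul a⁻¹).monotone.reflTransGen_symmGen ha
    simp only [leftMul_inl, mul_one, inv_mul_cancel] at this
    exact symm this

lemma reflTransGen_inl_one_of_closure_eq_top {s₀ : G} (hs₀ : s₀ ∈ S)
    (hS : Subgroup.closure (S * S⁻¹) = ⊤) (x : CayleyPoset G S) :
    ReflTransGen (SymmGen (· ≤ ·)) (inl 1) x := by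
  have hinl (g : G) := reflTransGen_inl_one_inl_of_mem_closure (S := S) (hS ▸ Subgroup.mem_top g)
  induction x with
  | inl g => exact hinl g
  | inr h =>
    have hbelow : (inl (h * s₀⁻¹) : CayleyPoset G S) ≤ inr h := by simpa [mul_assoc]
    exact (hinl _).tail hbelow.symmGen

def cosetLevel (s₀ : G) (H : Subgroup G) : CayleyPoset G S → G ⧸ H :=
  Sum.elim (↑) fun h ↦ ↑(h * s₀⁻¹)

lemma cosetLevel_eq_of_le {s₀ : G} (hs₀ : s₀ ∈ S) {x y : CayleyPoset G S} (hxy : x ≤ y) :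
    cosetLevel s₀ (Subgroup.closure (S * S⁻¹)) x =
      cosetLevel s₀ (Subgroup.closure (S * S⁻¹)) y := by
  induction x <;> induction y <;>
    simp only [inl_le_inl, inl_le_inr, inr_le_inr, not_inr_le_inl] at hxy
  · rw [hxy]
  · refine QuotientGroup.eq.mpr (Subgroup.subset_closure ?_)
    simpa [mul_assoc] using Set.mul_mem_mul hxy (Set.inv_mem_inv.mpr hs₀)
  · rw [hxy]

lemma cosetLevel_eq_of_reflTransGen {s₀ : G} (hs₀ : s₀ ∈ S) {x y : CayleyPoset G S}
    (hxy : ReflTransGen (SymmGen (· ≤ ·)) x y) :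
    cosetLevel s₀ (Subgroup.closure (S * S⁻¹)) x =
      cosetLevel s₀ (Subgroup.closure (S * S⁻¹)) y := by
  have hstep (a b : CayleyPoset G S) (hab : SymmGen (· ≤ ·) a b) :=
    hab.elim (cosetLevel_eq_of_le hs₀) fun hba ↦ (cosetLevel_eq_of_le hs₀ hba).symm
  simpa only [reflTransGen_eq_self] using ReflTransGen.lift _ hstep _ _ hxy

lemma closure_eq_top_of_connected {s₀ : G} (hs₀ : s₀ ∈ S)
    (hconn : ∀ x y : CayleyPoset G S, ReflTransGen (SymmGen (· ≤ ·)) x y) :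
    Subgroup.closure (S * S⁻¹) = ⊤ :=
  eq_top_iff.mpr fun g _ ↦ by
    simpa using QuotientGroup.eq.mp (cosetLevel_eq_of_reflTransGen hs₀ (hconn (inl 1) (inl g)))

end CayleyPoset

open Pointwise in
/-- The Cayley poset `P(G,S)` is connected iff
`S * S⁻¹ = {s*t⁻¹ : s,t ∈ S}` generates `G`. -/
theorem cayleyPoset_connected_iff (G : Type*) [Group G] (S : Set G) (hne : S.Nonempty) :
    (∀ x y : CayleyPoset G S,
        Relation.ReflTransGen (fun a b : CayleyPoset G S => a ≤ b ∨ b ≤ a) x y) ↔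
      Subgroup.closure (S * S⁻¹) = ⊤ := by
  obtain ⟨s₀, hs₀⟩ := hne
  refine ⟨CayleyPoset.closure_eq_top_of_connected hs₀, fun hS x y ↦ ?_⟩
  exact (symm (CayleyPoset.reflTransGen_inl_one_of_closure_eq_top hs₀ hS x)).trans
    (CayleyPoset.reflTransGen_inl_one_of_closure_eq_top hs₀ hS y)
end
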